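/- If F_1(z) := ∫_{a_0}^z f_1(w) dw for a fixed a_0 ∈ ℂ, then for n ≥ 2, C_a^b(f_1, f_2, ..., f_n) = C_a^b(F_1·f_2, f_3, ..., f_n) − F_1(a)·C_a^b(f_2, ..., f_n). -/

import Mathlib

noncomputable section

/-- The integral of `f` along the straight-line path from `a` to `b` in `ℂ`. -/
noncomputable def lineIntegral (a b : ℂ) (f : ℂ → ℂ) : ℂ :=
  ∫ t in (0:ℝ)..1, (b - a) * f (a + (t : ℂ) * (b - a))

/-- Auxiliary iterated integral: the head of the list is the *outermost* integrand. -/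
noncomputable def iterCAux (a : ℂ) : List (ℂ → ℂ) → ℂ → ℂ
  | [], _ => 1
  | f :: fs, b =>
      ∫ t in (0:ℝ)..1,
        (b - a) * (f (a + (t : ℂ) * (b - a)) * iterCAux a fs (a + (t : ℂ) * (b - a)))

/-- `iterC a b [f₁, …, fₙ]` is the iterated integral
`C_a^b(f₁,…,fₙ) = ∫_a^b fₙ(zₙ) ∫_a^{zₙ} f_{n-1}(z_{n-1}) ⋯ ∫_a^{z₂} f₁(z₁) dz₁ ⋯ dzₙ`,
with all integration along straight-line paths. -/
noncomputable def iterC (a b : ℂ) (l : List (ℂ → ℂ)) : ℂ := iterCAux a l.reverse b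

/-! Since `f₁` is entire it has a primitive, so the innermost integral is
`C_a^z(f₁) = F₁(z) - F₁(a)`. Substituting this into the integrand of the next integral and using
linearity of each of the remaining outer integrals gives the identity. -/

open intervalIntegral

section LineIntegral

variable {a b : ℂ} {f g : ℂ → ℂ}

lemma intervalIntegrable_lineIntegral_integrand (hf : Continuous f) (a b : ℂ) :
    IntervalIntegrable (fun t : ℝ => (b - a) * f (a + (t : ℂ) * (b - a)))
      MeasureTheory.volume 0 1 :=
  (by fun_prop : Continuous fun t : ℝ => (b - a) * f (a + (t : ℂ) * (b - a))).intervalIntegrable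
    0 1

lemma lineIntegral_sub (hf : Continuous f) (hg : Continuous g) :
    lineIntegral a b (fun z => f z - g z) = lineIntegral a b f - lineIntegral a b g := by
  rw [lineIntegral, lineIntegral, lineIntegral, ← integral_sub
    (intervalIntegrable_lineIntegral_integrand hf a b)
    (intervalIntegrable_lineIntegral_integrand hg a b)]
  simp only [mul_sub]

lemma lineIntegral_const_mul (c : ℂ) (f : ℂ → ℂ) :
    lineIntegral a b (fun z => c * f z) = c * lineIntegral a b f := by
  simp only [lineIntegral, mul_left_comm _ c, integral_const_mul]

lemma continuous_lineIntegral_right (hf : Continuous f) (a : ℂ) :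
    Continuous fun b => lineIntegral a b f :=
  continuous_parametric_intervalIntegral_of_continuous' (by fun_prop) 0 1

lemma lineIntegral_eq_sub_of_hasDerivAt {G : ℂ → ℂ} (hG : ∀ z, HasDerivAt G (f z) z)
    (hf : Continuous f) (a b : ℂ) : lineIntegral a b f = G b - G a := by
  have hderiv : ∀ t ∈ Set.uIcc (0:ℝ) 1, HasDerivAt (fun s : ℝ => G (a + (s : ℂ) * (b - a)))
      ((b - a) * f (a + (t : ℂ) * (b - a))) t := by
    intro t _
    have hline : HasDerivAt (fun z : ℂ => a + z * (b - a)) (b - a) (t : ℂ) := by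
      simpa using ((hasDerivAt_id (t : ℂ)).mul_const (b - a)).const_add a
    simpa [mul_comm] using ((hG _).comp (t : ℂ) hline).comp_ofReal
  rw [lineIntegral, integral_eq_sub_of_hasDerivAt hderiv
    (intervalIntegrable_lineIntegral_integrand hf a b)]
  simp

lemma Differentiable.lineIntegral_sub_lineIntegral (hf : Differentiable ℂ f) (a₀ a b : ℂ) :
    lineIntegral a₀ b f - lineIntegral a₀ a f = lineIntegral a b f := by
  obtain ⟨G, hG⟩ := hf.isExactOn_univ
  have hG' : ∀ z, HasDerivAt G (f z) z := fun z => hG z (Set.mem_univ z)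
  simp only [lineIntegral_eq_sub_of_hasDerivAt hG' hf.continuous]
  ring

end LineIntegral

section IterCAux

variable {a : ℂ}

lemma iterCAux_cons (a : ℂ) (f : ℂ → ℂ) (fs : List (ℂ → ℂ)) (b : ℂ) :
    iterCAux a (f :: fs) b = lineIntegral a b (fun z => f z * iterCAux a fs z) := rfl

lemma iterCAux_singleton (a : ℂ) (f : ℂ → ℂ) (b : ℂ) :
    iterCAux a [f] b = lineIntegral a b f := by
  rw [iterCAux_cons]
  simp only [iterCAux, mul_one]

lemma continuous_iterCAux {L : List (ℂ → ℂ)} (hL : ∀ f ∈ L, Continuous f) :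
    Continuous (iterCAux a L) := by
  induction L with
  | nil => exact continuous_const
  | cons f fs ih =>
    simp only [List.forall_mem_cons] at hL
    simp only [funext (iterCAux_cons a f fs)]
    exact continuous_lineIntegral_right (hL.1.mul (ih hL.2)) a

lemma iterCAux_append_cons (L M : List (ℂ → ℂ)) (g : ℂ → ℂ) :
    iterCAux a (L ++ g :: M) = iterCAux a (L ++ [fun z => g z * iterCAux a M z]) := by
  induction L with
  | nil => funext b; simp only [List.nil_append, iterCAux_cons, iterCAux, mul_one]
  | cons f L ih => funext b; simp only [List.cons_append, iterCAux_cons, ih]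

lemma iterCAux_append_sub_const_mul {L : List (ℂ → ℂ)} (hL : ∀ f ∈ L, Continuous f)
    {g h : ℂ → ℂ} (hg : Continuous g) (hh : Continuous h) (c b : ℂ) :
    iterCAux a (L ++ [fun z => g z - c * h z]) b =
      iterCAux a (L ++ [g]) b - c * iterCAux a (L ++ [h]) b := by
  induction L generalizing b with
  | nil =>
    simp only [List.nil_append, iterCAux_singleton]
    rw [lineIntegral_sub (g := fun z => c * h z) hg (by fun_prop), lineIntegral_const_mul]
  | cons f L ih =>
    simp only [List.forall_mem_cons] at hL
    have hcont : ∀ k, Continuous k → Continuous (iterCAux a (L ++ [k])) := fun k hk =>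
      continuous_iterCAux (List.forall_mem_append.2 ⟨hL.2, List.forall_mem_singleton.2 hk⟩)
    simp only [List.cons_append, iterCAux_cons, ih hL.2, mul_sub, mul_left_comm _ c]
    rw [lineIntegral_sub (f := fun z => f z * iterCAux a (L ++ [g]) z)
      (g := fun z => c * (f z * iterCAux a (L ++ [h]) z)) (hL.1.mul (hcont g hg))
      (continuous_const.mul (hL.1.mul (hcont h hh))), lineIntegral_const_mul]

end IterCAux

theorem stmt_3 (f₁ f₂ : ℂ → ℂ) (rest : List (ℂ → ℂ))
    (hf₁ : Differentiable ℂ f₁) (hf₂ : Differentiable ℂ f₂)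
    (hrest : ∀ f ∈ rest, Differentiable ℂ f) (a₀ a b : ℂ) :
    iterC a b (f₁ :: f₂ :: rest) =
      iterC a b ((fun z => lineIntegral a₀ z f₁ * f₂ z) :: rest) -
        lineIntegral a₀ a f₁ * iterC a b (f₂ :: rest) := by
  have hF : Continuous fun z => lineIntegral a₀ z f₁ :=
    continuous_lineIntegral_right hf₁.continuous a₀
  have hrest' : ∀ f ∈ rest.reverse, Continuous f := fun f hf =>
    (hrest f (List.mem_reverse.1 hf)).continuous
  have hinner : (fun z => f₂ z * iterCAux a [f₁] z) =
      fun z => lineIntegral a₀ z f₁ * f₂ z - lineIntegral a₀ a f₁ * f₂ z := by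
    funext z
    rw [iterCAux_singleton, ← hf₁.lineIntegral_sub_lineIntegral a₀]
    ring
  simp only [iterC, List.reverse_cons, List.append_assoc, List.cons_append, List.nil_append]
  rw [iterCAux_append_cons, hinner, iterCAux_append_sub_const_mul hrest'
    (g := fun z => lineIntegral a₀ z f₁ * f₂ z) (hF.mul hf₂.continuous) hf₂.continuous]
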